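/- For A ∈ M_{m×n}, there is a unique matrix Π_A ∈ M_{m×m} such that A ⊛ x = Π_A · x for all x ∈ ℝ^m, namely Π_A = A · Ψ_{n×m}. -/
import Mathlib


open Matrix Kronecker Finset

noncomputable section

/-- The all-ones column vector of length `k`, viewed as a `k × 1` matrix. -/
def onesCol (k : ℕ) : Matrix (Fin k) (Fin 1) ℝ := Matrix.of fun _ _ => 1

/-- `A ⊗ 1ᵀ_α`, reindexed to an ordinary `Fin`-indexed matrix. -/
def rightExpand {m n : ℕ} (A : Matrix (Fin m) (Fin n) ℝ) (α : ℕ) :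
    Matrix (Fin m) (Fin (n * α)) ℝ :=
  Matrix.reindex (Equiv.prodUnique (Fin m) (Fin 1)) finProdFinEquiv (A ⊗ₖ (onesCol α)ᵀ)

/-- `B ⊗ 1_β`, reindexed to an ordinary `Fin`-indexed matrix. -/
def leftExpand {p q : ℕ} (B : Matrix (Fin p) (Fin q) ℝ) (β : ℕ) :
    Matrix (Fin (p * β)) (Fin q) ℝ :=
  Matrix.reindex finProdFinEquiv (Equiv.prodUnique (Fin q) (Fin 1)) (B ⊗ₖ onesCol β)

theorem dk_dim_eq (n p : ℕ) :
    n * (Nat.lcm n p / n) = p * (Nat.lcm n p / p) := by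
  rw [Nat.mul_div_cancel' (Nat.dvd_lcm_left n p),
    Nat.mul_div_cancel' (Nat.dvd_lcm_right n p)]

/-- The dimension keeping semi-tensor product (DK-STP)
`A ⊛ B := (A ⊗ 1ᵀ_{t/n})(B ⊗ 1_{t/p})`, `t = lcm(n,p)`. -/
def dkstp {m n p q : ℕ} (A : Matrix (Fin m) (Fin n) ℝ) (B : Matrix (Fin p) (Fin q) ℝ) :
    Matrix (Fin m) (Fin q) ℝ :=
  rightExpand A (Nat.lcm n p / n) *
    (leftExpand B (Nat.lcm n p / p)).submatrix (Fin.cast (dk_dim_eq n p)) id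

infixl:70 " ⊛ " => dkstp

/-- The bridge matrix `Ψ_{n×p} := (I_n ⊗ 1ᵀ_{t/n})(I_p ⊗ 1_{t/p})`. -/
def bridge (n p : ℕ) : Matrix (Fin n) (Fin p) ℝ :=
  (1 : Matrix (Fin n) (Fin n) ℝ) ⊛ (1 : Matrix (Fin p) (Fin p) ℝ)

/-- `x ⊗ 1_α`, as a vector of length `m * α`. -/
def vecExpand {m : ℕ} (x : Fin m → ℝ) (α : ℕ) : Fin (m * α) → ℝ :=
  fun i => x (finProdFinEquiv.symm i).1

/-- The VV-STP `x ⊙ y := (x ⊗ 1_{t/m})ᵀ(y ⊗ 1_{t/n})`, `t = lcm(m,n)`. -/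
def vvstp {m n : ℕ} (x : Fin m → ℝ) (y : Fin n → ℝ) : ℝ :=
  vecExpand x (Nat.lcm m n / m) ⬝ᵥ
    fun i => vecExpand y (Nat.lcm m n / n) (Fin.cast (dk_dim_eq m n) i)



lemma rightExpand_apply {m n : ℕ} (A : Matrix (Fin m) (Fin n) ℝ) (α : ℕ)
    (i : Fin m) (j : Fin (n * α)) :
    rightExpand A α i j = A i (finProdFinEquiv.symm j).1 := by
  simp [rightExpand, onesCol, Matrix.kroneckerMap_apply]

lemma leftExpand_apply {p q : ℕ} (B : Matrix (Fin p) (Fin q) ℝ) (β : ℕ)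
    (i : Fin (p * β)) (j : Fin q) :
    leftExpand B β i j = B (finProdFinEquiv.symm i).1 j := by
  simp [leftExpand, onesCol, Matrix.kroneckerMap_apply]

lemma rightExpand_eq {m n : ℕ} (A : Matrix (Fin m) (Fin n) ℝ) (α : ℕ) :
    rightExpand A α = A * rightExpand (1 : Matrix (Fin n) (Fin n) ℝ) α := by
  ext i j
  simp [Matrix.mul_apply, rightExpand_apply, Matrix.one_apply]

lemma leftExpand_eq {p q : ℕ} (B : Matrix (Fin p) (Fin q) ℝ) (β : ℕ) :
    leftExpand B β = leftExpand (1 : Matrix (Fin p) (Fin p) ℝ) β * B := by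
  ext i j
  simp [Matrix.mul_apply, leftExpand_apply, Matrix.one_apply]

lemma submatrix_mul_id {a b p q : ℕ} (M : Matrix (Fin a) (Fin p) ℝ)
    (B : Matrix (Fin p) (Fin q) ℝ) (f : Fin b → Fin a) :
    (M * B).submatrix f id = M.submatrix f id * B := by
  ext i j
  simp [Matrix.mul_apply]

lemma dkstp_eq {m n p q : ℕ} (A : Matrix (Fin m) (Fin n) ℝ)
    (B : Matrix (Fin p) (Fin q) ℝ) :
    A ⊛ B = A * bridge n p * B := by
  unfold dkstp bridge dkstp
  rw [rightExpand_eq A, leftExpand_eq B, submatrix_mul_id]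
  simp only [Matrix.mul_assoc]

/-- for `A ∈ M_{m×n}` there is a unique `Π_A ∈ M_{m×m}` with
`A ⊛ x = Π_A x` for all `x ∈ ℝ^m` (vectors viewed as `m × 1` matrices), namely
`Π_A = A Ψ_{n×m}`. -/
theorem stmt15 {m n : ℕ} (A : Matrix (Fin m) (Fin n) ℝ) :
    (∀ x : Fin m → ℝ,
      A ⊛ (Matrix.of fun i (_ : Fin 1) => x i) =
        Matrix.of fun i (_ : Fin 1) => (A * bridge n m).mulVec x i) ∧
    ∀ P : Matrix (Fin m) (Fin m) ℝ,
      (∀ x : Fin m → ℝ,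
        A ⊛ (Matrix.of fun i (_ : Fin 1) => x i) =
          Matrix.of fun i (_ : Fin 1) => P.mulVec x i) →
      P = A * bridge n m := by
  have key : ∀ x : Fin m → ℝ,
      A ⊛ (Matrix.of fun i (_ : Fin 1) => x i) =
        Matrix.of fun i (_ : Fin 1) => (A * bridge n m).mulVec x i := by
    intro x
    rw [dkstp_eq]
    ext i j
    simp [Matrix.mul_apply, Matrix.mulVec, dotProduct]
  refine ⟨key, fun P hP => ?_⟩
  ext i j
  have h := (hP (Pi.single j 1)).symm.trans (key (Pi.single j 1))
  have h2 := congrFun (congrFun h i) 0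
  simpa [Matrix.mulVec_single] using h2
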